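/- arXiv:1112.5047 — 4 statements merged into one kernel-verified Lean document; each statement's English description precedes it below -/
import Mathlib

section
/- Let G be a finite simple graph on vertex set {1,...,d}, and for an edge e=(i,j) let ρ(e)=e_i+e_j ∈ ℝ^d. For two distinct edges e and f of G, the segment conv{ρ(e),ρ(f)} is an edge (1-dimensional face) of the edge polytope P_G if and only if e and f are not cycle-compatible, i.e., there is no 4-cycle in the subgraph of G induced by the union of the vertex sets of e and f. -/
open scoped BigOperators

/-- `ρ(i,j) = e_i + e_j` -/
noncomputable def rho {d : ℕ} (i j : Fin d) : Fin d → ℝ :=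
  fun t => (if t = i then 1 else 0) + (if t = j then 1 else 0)

/-- The edge polytope of a graph `G` on `[d]`. -/
noncomputable def edgePolytope {d : ℕ} (G : SimpleGraph (Fin d)) : Set (Fin d → ℝ) :=
  convexHull ℝ {x | ∃ i j, G.Adj i j ∧ x = rho i j}

/-- dot product -/
def dotp {d : ℕ} (a x : Fin d → ℝ) : ℝ := ∑ t, a t * x t

/-- a polytope is integral if all its vertices (extreme points) are lattice points -/
def IsIntegralSet {d : ℕ} (P : Set (Fin d → ℝ)) : Prop :=
  ∀ x ∈ Set.extremePoints ℝ P, ∀ t, ∃ z : ℤ, x t = (z : ℝ)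

/-- The hyperplane `a·x = b` decomposes `P`: it meets the relative interior of `P`,
both open sides meet `P`, and both closed half-space pieces are integral. -/
def Decomposes {d : ℕ} (P : Set (Fin d → ℝ)) (a : Fin d → ℝ) (b : ℝ) : Prop :=
  (∃ x ∈ intrinsicInterior ℝ P, dotp a x = b) ∧
  (∃ y ∈ P, dotp a y < b) ∧ (∃ y ∈ P, b < dotp a y) ∧
  IsIntegralSet (P ∩ {x | b ≤ dotp a x}) ∧
  IsIntegralSet (P ∩ {x | dotp a x ≤ b})

/-- Edges  and  of  are cycle-compatible: they are vertex-disjoint and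
there is a 4-cycle in the subgraph induced on their four vertices. -/
def CycleCompatible {d : ℕ} (G : SimpleGraph (Fin d)) (i j k l : Fin d) : Prop :=
  (({i, j} : Set (Fin d)) ∩ {k, l} = ∅) ∧
  ∃ p q r s : Fin d, ({p, q, r, s} : Set (Fin d)) = {i, j, k, l} ∧
    G.Adj p q ∧ G.Adj q r ∧ G.Adj r s ∧ G.Adj s p

/-!
(→) If `e = ij` and `f = kl` lie on a 4-cycle `p q r s` through the same four vertices, then
`ρ(pq) + ρ(rs) = ρ(qr) + ρ(sp) = ρ(e) + ρ(f)`, and one of `pq`, `qr` is neither `e` nor `f`.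
Since an exposed face is extreme, the common midpoint forces that vertex into `[ρ(e), ρ(f)]`,
whose only `0/1` points are its endpoints.

(←) A weight vector `w` for which `w s + w t` is maximal exactly on `e` and `f` exposes the
segment. For edges sharing a vertex take weight `2` there and `1` on the other two endpoints.
For disjoint edges, since neither `ijkl` nor `ijlk` is a cycle, some endpoint, say `j`, has no
neighbour in `f`; take weights `1, 3, 2, 2` on `i, j, k, l`.
-/

open Set

theorem pair_inter_pair_eq_empty_iff {α : Type*} {i j k l : α} :
    ({i, j} : Set α) ∩ {k, l} = ∅ ↔ i ≠ k ∧ i ≠ l ∧ j ≠ k ∧ j ≠ l := by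
  simp only [← disjoint_iff_inter_eq_empty, disjoint_insert_left, disjoint_singleton_left,
    mem_insert_iff, mem_singleton_iff, not_or, and_assoc]

theorem isExposed_convexHull_of_forall_le {E : Type*} [AddCommGroup E] [Module ℝ E]
    [TopologicalSpace E] {s : Set E} (l : StrongDual ℝ E) {b : ℝ}
    (hle : ∀ x ∈ s, l x ≤ b) :
    IsExposed ℝ (convexHull ℝ s) (convexHull ℝ {x ∈ s | l x = b}) := by
  rintro ⟨x₀, hx₀⟩
  refine ⟨l, ?_⟩
  have hull_le : convexHull ℝ s ⊆ {x | l x ≤ b} :=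
    convexHull_min hle (convex_halfSpace_le l.isLinear b)
  have hull_eq : convexHull ℝ {x ∈ s | l x = b} ⊆ {x | l x = b} :=
    convexHull_min (fun x hx => hx.2) (convex_hyperplane l.isLinear b)
  refine Set.Subset.antisymm (fun x hx => ⟨convexHull_mono (sep_subset _ _) hx,
    fun y hy => (hull_le hy).trans (hull_eq hx).ge⟩) ?_
  rintro x ⟨hx, hmax⟩
  have hbx : b ≤ l x := (hull_eq hx₀).ge.trans (hmax x₀ (convexHull_mono (sep_subset _ _) hx₀))
  rcases eq_empty_or_nonempty {y ∈ s | l y < b} with hlt | hlt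
  · have hs : s ⊆ {y ∈ s | l y = b} := fun y hy =>
      ⟨hy, (hle y hy).eq_of_not_lt fun h => hlt.subset ⟨hy, h⟩⟩
    exact convexHull_mono hs hx
  · -- split `x` along `s = {l = b} ∪ {l < b}`: the part with `l < b` must have weight `0`
    have hs : s = {y ∈ s | l y = b} ∪ {y ∈ s | l y < b} := by
      rw [← sep_or]
      exact (sep_eq_self_iff_mem_true.2 fun y hy => (hle y hy).eq_or_lt).symm
    rw [hs, convexHull_union (convexHull_nonempty_iff.1 ⟨x₀, hx₀⟩) hlt, mem_convexJoin] at hx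
    obtain ⟨y, hy, z, hz, a, c, ha, hc, hac, rfl⟩ := hx
    have hlz : l z < b := convexHull_min (fun x hx => hx.2) (convex_halfSpace_lt l.isLinear b) hz
    have hc0 : c = 0 := by
      rw [map_add, map_smul, map_smul, hull_eq hy, smul_eq_mul, smul_eq_mul] at hbx
      have hneg : c * (b - l z) ≤ 0 := by linear_combination hbx + b * hac
      exact le_antisymm (nonpos_of_mul_nonpos_left hneg (sub_pos.2 hlz)) hc
    rw [hc0, zero_smul, add_zero, (by linarith : a = 1), one_smul]
    exact hy

section EdgePolytopeFaces

variable {d : ℕ}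

theorem rho_comm (i j : Fin d) : rho i j = rho j i := by
  ext t; simp only [rho, add_comm]

theorem rho_eq_rho_iff {i j k l : Fin d} (hij : i ≠ j) (hkl : k ≠ l) :
    rho i j = rho k l ↔ (i = k ∧ j = l) ∨ (i = l ∧ j = k) := by
  constructor
  · intro h
    have hi := congrFun h i
    have hj := congrFun h j
    simp only [rho] at hi hj
    grind
  · rintro (⟨rfl, rfl⟩ | ⟨rfl, rfl⟩)
    exacts [rfl, rho_comm _ _]

theorem rho_mem_edgePolytope {G : SimpleGraph (Fin d)} {i j : Fin d} (h : G.Adj i j) :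
    rho i j ∈ edgePolytope G :=
  subset_convexHull ℝ _ ⟨i, j, h, rfl⟩

noncomputable def weightFunctional (w : Fin d → ℝ) : StrongDual ℝ (Fin d → ℝ) :=
  ∑ t, w t • ContinuousLinearMap.proj t

theorem weightFunctional_rho (w : Fin d → ℝ) (s t : Fin d) :
    weightFunctional w (rho s t) = w s + w t := by
  simp [weightFunctional, rho, mul_add, Finset.sum_add_distrib]

theorem isExposed_segment_of_weights {G : SimpleGraph (Fin d)} {i j k l : Fin d}
    (hij : G.Adj i j) (hkl : G.Adj k l) (w : Fin d → ℝ) {b : ℝ}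
    (hwij : w i + w j = b) (hwkl : w k + w l = b)
    (hle : ∀ s t, G.Adj s t → w s + w t ≤ b)
    (heq : ∀ s t, G.Adj s t → w s + w t = b → rho s t = rho i j ∨ rho s t = rho k l) :
    IsExposed ℝ (edgePolytope G) (segment ℝ (rho i j) (rho k l)) := by
  have hface : {x ∈ {x | ∃ s t, G.Adj s t ∧ x = rho s t} | weightFunctional w x = b} =
      {rho i j, rho k l} := by
    ext x
    simp only [mem_ofPred_eq, mem_insert_iff, mem_singleton_iff]
    constructor
    · rintro ⟨⟨s, t, hst, rfl⟩, hx⟩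
      exact heq s t hst (by rwa [weightFunctional_rho] at hx)
    · rintro (rfl | rfl)
      exacts [⟨⟨i, j, hij, rfl⟩, by rwa [weightFunctional_rho]⟩,
        ⟨⟨k, l, hkl, rfl⟩, by rwa [weightFunctional_rho]⟩]
  rw [← convexHull_pair, ← hface]
  refine isExposed_convexHull_of_forall_le (weightFunctional w) ?_
  rintro _ ⟨s, t, hst, rfl⟩
  rw [weightFunctional_rho]
  exact hle s t hst

theorem isExposed_segment_of_common_vertex {G : SimpleGraph (Fin d)} {v j l : Fin d}
    (hvj : G.Adj v j) (hvl : G.Adj v l) :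
    IsExposed ℝ (edgePolytope G) (segment ℝ (rho v j) (rho v l)) := by
  refine isExposed_segment_of_weights hvj hvl
    (fun t => if t = v then 2 else if t = j ∨ t = l then 1 else 0) (b := 3) ?_ ?_ ?_ ?_
  · grind [SimpleGraph.Adj.ne]
  · grind [SimpleGraph.Adj.ne]
  · intro s t hst
    grind [SimpleGraph.Adj.ne]
  · intro s t hst hsum
    rw [rho_eq_rho_iff hst.ne hvj.ne, rho_eq_rho_iff hst.ne hvl.ne]
    grind [SimpleGraph.Adj.ne, SimpleGraph.Adj.symm]

theorem isExposed_segment_of_disjoint_of_not_adj {G : SimpleGraph (Fin d)} {i j k l : Fin d}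
    (hij : G.Adj i j) (hkl : G.Adj k l) (hik : i ≠ k) (hil : i ≠ l) (hjk : j ≠ k) (hjl : j ≠ l)
    (hjk' : ¬ G.Adj j k) (hjl' : ¬ G.Adj j l) :
    IsExposed ℝ (edgePolytope G) (segment ℝ (rho i j) (rho k l)) := by
  refine isExposed_segment_of_weights hij hkl
    (fun t => if t = j then 3 else if t = i then 1 else if t = k ∨ t = l then 2 else 0)
    (b := 4) ?_ ?_ ?_ ?_
  · grind [SimpleGraph.Adj.ne]
  · grind [SimpleGraph.Adj.ne]
  · intro s t hst
    grind [SimpleGraph.Adj.ne, SimpleGraph.Adj.symm]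
  · intro s t hst hsum
    rw [rho_eq_rho_iff hst.ne hij.ne, rho_eq_rho_iff hst.ne hkl.ne]
    grind [SimpleGraph.Adj.ne, SimpleGraph.Adj.symm]

theorem rho_eq_of_mem_segment {i j k l u v : Fin d} (hij : i ≠ j) (hik : i ≠ k) (hil : i ≠ l)
    (h : rho u v ∈ segment ℝ (rho i j) (rho k l)) : rho u v = rho i j ∨ rho u v = rho k l := by
  obtain ⟨a, c, ha, hc, hac, hx⟩ := h
  have hi := congrFun hx i
  simp only [Pi.add_apply, Pi.smul_apply, smul_eq_mul, rho, if_pos, if_neg hij, if_neg hik,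
    if_neg hil] at hi
  obtain rfl | rfl : a = 0 ∨ a = 1 := by grind
  · right; rw [← hx, (by linarith : c = 1)]; simp
  · left; rw [← hx, (by linarith : c = 0)]; simp

theorem rho_add_rho_eq_of_insert_eq {p q r s i j k l : Fin d}
    (hset : ({p, q, r, s} : Set (Fin d)) = {i, j, k, l})
    (hij : i ≠ j) (hik : i ≠ k) (hil : i ≠ l) (hjk : j ≠ k) (hjl : j ≠ l) (hkl : k ≠ l) :
    rho p q + rho r s = rho i j + rho k l := by
  have h := Set.ext_iff.1 hset
  simp only [mem_insert_iff, mem_singleton_iff] at h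
  -- with `i, j, k, l` distinct, these four memberships force `p, q, r, s` to be distinct
  have := (h i).2 (by simp)
  have := (h j).2 (by simp)
  have := (h k).2 (by simp)
  have := (h l).2 (by simp)
  ext t
  have := h t
  simp only [Pi.add_apply, rho]
  grind

theorem rho_eq_of_isExposed_of_add_eq {G : SimpleGraph (Fin d)} {i j k l u v w x : Fin d}
    (hexp : IsExposed ℝ (edgePolytope G) (segment ℝ (rho i j) (rho k l)))
    (hij : i ≠ j) (hik : i ≠ k) (hil : i ≠ l) (huv : G.Adj u v) (hwx : G.Adj w x)
    (hsum : rho u v + rho w x = rho i j + rho k l) :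
    rho u v = rho i j ∨ rho u v = rho k l := by
  have hmid : midpoint ℝ (rho u v) (rho w x) ∈ segment ℝ (rho i j) (rho k l) := by
    rw [midpoint_eq_smul_add, hsum, ← midpoint_eq_smul_add]
    exact midpoint_mem_segment _ _
  exact rho_eq_of_mem_segment hij hik hil <|
    hexp.isExtreme.left_mem_of_mem_openSegment (rho_mem_edgePolytope huv)
      (rho_mem_edgePolytope hwx) hmid (midpoint_mem_openSegment _ _)

theorem not_cycleCompatible_of_isExposed {G : SimpleGraph (Fin d)} {i j k l : Fin d}
    (hij : G.Adj i j) (hkl : G.Adj k l)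
    (hexp : IsExposed ℝ (edgePolytope G) (segment ℝ (rho i j) (rho k l))) :
    ¬ CycleCompatible G i j k l := by
  rintro ⟨hdisj, p, q, r, s, hset, hpq, hqr, hrs, hsp⟩
  obtain ⟨hik, hil, hjk, hjl⟩ := pair_inter_pair_eq_empty_iff.1 hdisj
  have hsum := rho_add_rho_eq_of_insert_eq hset hij.ne hik hil hjk hjl hkl.ne
  have hsum' : rho q r + rho s p = rho i j + rho k l := by
    rw [← hsum]; ext t; simp only [Pi.add_apply, rho]; ring
  have hpr : p ≠ r := by
    -- otherwise the `p`-coordinate of `hsum` reads `2 = 1` or `2 = 0`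
    rintro rfl
    have := congrFun hsum p
    simp only [Pi.add_apply, rho] at this
    grind [SimpleGraph.Adj.ne]
  have hpq' := rho_eq_of_isExposed_of_add_eq hexp hij.ne hik hil hpq hrs hsum
  have hqr' := rho_eq_of_isExposed_of_add_eq hexp hij.ne hik hil hqr hsp hsum'
  rw [rho_eq_rho_iff hpq.ne hij.ne, rho_eq_rho_iff hpq.ne hkl.ne] at hpq'
  rw [rho_eq_rho_iff hqr.ne hij.ne, rho_eq_rho_iff hqr.ne hkl.ne] at hqr'
  grind

theorem isExposed_of_not_cycleCompatible {G : SimpleGraph (Fin d)} {i j k l : Fin d}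
    (hij : G.Adj i j) (hkl : G.Adj k l) (hnc : ¬ CycleCompatible G i j k l) :
    IsExposed ℝ (edgePolytope G) (segment ℝ (rho i j) (rho k l)) := by
  by_cases hdisj : ({i, j} : Set (Fin d)) ∩ {k, l} = ∅
  · obtain ⟨hik, hil, hjk, hjl⟩ := pair_inter_pair_eq_empty_iff.1 hdisj
    have hjk_li : ¬ (G.Adj j k ∧ G.Adj l i) := fun h =>
      hnc ⟨hdisj, i, j, k, l, rfl, hij, h.1, hkl, h.2⟩
    have hjl_ki : ¬ (G.Adj j l ∧ G.Adj k i) := fun h =>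
      hnc ⟨hdisj, i, j, l, k, by rw [pair_comm l k], hij, h.1, hkl.symm, h.2⟩
    rcases not_and_or.1 hjk_li with hjk' | hli' <;> rcases not_and_or.1 hjl_ki with hjl' | hki'
    · exact isExposed_segment_of_disjoint_of_not_adj hij hkl hik hil hjk hjl hjk' hjl'
    · rw [segment_symm, rho_comm i, rho_comm k]
      exact isExposed_segment_of_disjoint_of_not_adj hkl.symm hij.symm hjl.symm hil.symm
        hjk.symm hik.symm (fun h => hjk' h.symm) hki'
    · rw [segment_symm]
      exact isExposed_segment_of_disjoint_of_not_adj hkl hij hik.symm hjk.symm hil.symm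
        hjl.symm hli' (fun h => hjl' h.symm)
    · rw [rho_comm i]
      exact isExposed_segment_of_disjoint_of_not_adj hij.symm hkl hjk hjl hik hil
        (fun h => hki' h.symm) (fun h => hli' h.symm)
  · obtain ⟨v, hvij, hvkl⟩ := nonempty_iff_ne_empty.2 hdisj
    simp only [mem_insert_iff, mem_singleton_iff] at hvij hvkl
    rcases hvij with rfl | rfl <;> rcases hvkl with rfl | rfl
    · exact isExposed_segment_of_common_vertex hij hkl
    · rw [rho_comm k]; exact isExposed_segment_of_common_vertex hij hkl.symm
    · rw [rho_comm i]; exact isExposed_segment_of_common_vertex hij.symm hkl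
    · rw [rho_comm i, rho_comm k]; exact isExposed_segment_of_common_vertex hij.symm hkl.symm

theorem rho_ne_rho_of_pair_ne {i j k l : Fin d} (hij : i ≠ j) (hkl : k ≠ l)
    (hne : ({i, j} : Set (Fin d)) ≠ {k, l}) : rho i j ≠ rho k l := by
  rw [Ne, rho_eq_rho_iff hij hkl]
  rintro (⟨rfl, rfl⟩ | ⟨rfl, rfl⟩)
  exacts [hne rfl, hne (pair_comm _ _)]

end EdgePolytopeFaces

/-- for distinct edges e=(i,j), f=(k,l) of G, conv{ρ(e),ρ(f)} is an edge
(1-dimensional face) of the edge polytope iff e and f are not cycle-compatible. -/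
theorem stmt0 {d : ℕ} (G : SimpleGraph (Fin d)) (i j k l : Fin d)
    (hij : G.Adj i j) (hkl : G.Adj k l)
    (hne : ({i, j} : Set (Fin d)) ≠ {k, l}) :
    (rho i j ≠ rho k l ∧
      IsExposed ℝ (edgePolytope G) (segment ℝ (rho i j) (rho k l))) ↔
    ¬ CycleCompatible G i j k l :=
  ⟨fun ⟨_, hexp⟩ => not_cycleCompatible_of_isExposed hij hkl hexp,
    fun hnc => ⟨rho_ne_rho_of_pair_ne hij.ne hkl.ne hne,
      isExposed_of_not_cycleCompatible hij hkl hnc⟩⟩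
end

section
/- If the edge polytope P_G of a finite connected simple graph G is decomposable by a hyperplane H not passing through the origin, then there exists a hyperplane H' through the origin with H ∩ P_G = H' ∩ P_G, giving the same decomposition. -/
open scoped BigOperators

lemma sum_mem_edgePolytope {d : ℕ} (G : SimpleGraph (Fin d)) :
    ∀ x ∈ edgePolytope G, ∑ t, x t = 2 := by
  intro x hx
  have hsub : edgePolytope G ⊆ {x : Fin d → ℝ | ∑ t, x t = 2} := by
    apply convexHull_min
    · rintro x ⟨i, j, -, rfl⟩
      simp [rho, Finset.sum_add_distrib]
      norm_num
    · intro x hx y hy p q hp hq hpq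
      simp only [Set.mem_setOf_eq] at *
      simp only [Pi.add_apply, Pi.smul_apply, smul_eq_mul, Finset.sum_add_distrib,
        ← Finset.mul_sum, hx, hy]
      linarith
  exact hsub hx

/-- a separating hyperplane not through the origin can be replaced by one
through the origin giving the same intersection with P_G and the same decomposition. -/
theorem stmt2 {d : ℕ} (G : SimpleGraph (Fin d)) (hG : G.Connected)
    (a : Fin d → ℝ) (b : ℝ) (ha : a ≠ 0) (hb : b ≠ 0)
    (hdec : Decomposes (edgePolytope G) a b) :
    ∃ a' : Fin d → ℝ, a' ≠ 0 ∧ Decomposes (edgePolytope G) a' 0 ∧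
      {x | dotp a' x = 0} ∩ edgePolytope G = {x | dotp a x = b} ∩ edgePolytope G ∧
      edgePolytope G ∩ {x | 0 ≤ dotp a' x} = edgePolytope G ∩ {x | b ≤ dotp a x} ∧
      edgePolytope G ∩ {x | dotp a' x ≤ 0} = edgePolytope G ∩ {x | dotp a x ≤ b} := by
  have hsum := sum_mem_edgePolytope G
  set a' : Fin d → ℝ := fun t => a t - b / 2 with ha'def
  have hdot : ∀ x ∈ edgePolytope G, dotp a' x = dotp a x - b := by
    intro x hx
    have h2 := hsum x hx
    simp only [dotp, ha'def, sub_mul, Finset.sum_sub_distrib, ← Finset.mul_sum, h2]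
    ring
  refine ⟨a', ?_, ?_, ?_, ?_, ?_⟩
  · intro h
    obtain ⟨y, hy, hylt⟩ := hdec.2.1
    have hay : ∀ t, a t = b / 2 := by
      intro t
      have := congrFun h t
      simp only [ha'def, Pi.zero_apply] at this
      linarith
    have : dotp a y = b := by
      simp only [dotp, hay, ← Finset.mul_sum, hsum y hy]
      ring
    linarith
  · obtain ⟨⟨x, hx, hxe⟩, ⟨y1, hy1, h1⟩, ⟨y2, hy2, h2⟩, hi1, hi2⟩ := hdec
    refine ⟨⟨x, hx, ?_⟩, ⟨y1, hy1, ?_⟩, ⟨y2, hy2, ?_⟩, ?_, ?_⟩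
    · rw [hdot x (intrinsicInterior_subset hx), hxe]; ring
    · rw [hdot y1 hy1]; linarith
    · rw [hdot y2 hy2]; linarith
    · have heq : edgePolytope G ∩ {x | 0 ≤ dotp a' x}
          = edgePolytope G ∩ {x | b ≤ dotp a x} := by
        ext z
        constructor <;> rintro ⟨hz, hz2⟩ <;> refine ⟨hz, ?_⟩ <;>
          simp only [Set.mem_setOf_eq] at hz2 ⊢ <;>
          have := hdot z hz <;> linarith
      rw [heq]; exact hi1
    · have heq : edgePolytope G ∩ {x | dotp a' x ≤ 0}
          = edgePolytope G ∩ {x | dotp a x ≤ b} := by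
        ext z
        constructor <;> rintro ⟨hz, hz2⟩ <;> refine ⟨hz, ?_⟩ <;>
          simp only [Set.mem_setOf_eq] at hz2 ⊢ <;>
          have := hdot z hz <;> linarith
      rw [heq]; exact hi2
  · ext z
    constructor <;> rintro ⟨hz1, hz2⟩ <;> refine ⟨?_, hz2⟩ <;>
      simp only [Set.mem_setOf_eq] at hz1 ⊢ <;>
      have := hdot z hz2 <;> linarith
  · ext z
    constructor <;> rintro ⟨hz1, hz2⟩ <;> refine ⟨hz1, ?_⟩ <;>
      simp only [Set.mem_setOf_eq] at hz2 ⊢ <;>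
      have := hdot z hz1 <;> linarith
  · ext z
    constructor <;> rintro ⟨hz1, hz2⟩ <;> refine ⟨hz1, ?_⟩ <;>
      simp only [Set.mem_setOf_eq] at hz2 ⊢ <;>
      have := hdot z hz1 <;> linarith
end

section
/- The edge polytope of the graph G on 6 vertices with edges {1,2},{2,3},{3,4},{1,4},{1,5},{2,5},{2,6},{3,6} (which contains the 4-cycle 1-2-3-4) is indecomposable. That is, containing a 4-cycle is not sufficient for decomposability. -/
open scoped BigOperators

/-- The graph on 6 vertices (0-indexed) with edges
(0,1),(1,2),(2,3),(0,3),(0,4),(1,4),(1,5),(2,5). -/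
def G5 : SimpleGraph (Fin 6) :=
  SimpleGraph.fromRel (fun i j =>
    (i, j) ∈ ([(0, 1), (1, 2), (2, 3), (0, 3), (0, 4), (1, 4), (1, 5), (2, 5)] :
      List (Fin 6 × Fin 6)))

/-
Let `a · x = b` cut `P_G` with an integral upper piece `P_G ∩ {b ≤ a · x}`. Its vertices are lattice
points of `P_G` inside the unit cube, hence vertices `ρ_e` of `P_G`, so by Krein–Milman the upper
piece is the convex hull of the `ρ_e` with `b ≤ a · ρ_e`. For a positive edge `p` and a negative
edge `q`, the point where the segment `[ρ_q, ρ_p]` crosses the hyperplane is then a convex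
combination of zero edges (`a · ρ_e = b`), and a coordinate comparison shows that this forces `p`
and `q` to be opposite edges of the 4-cycle. Then every edge off the cycle is a zero edge, and this
makes some positive edge adjacent to a negative one.
-/

open Set

section HalfSpaceCut

variable {ι E : Type*} [Fintype ι] [AddCommGroup E] [Module ℝ E]

theorem weight_eq_zero_of_apply_sum_eq {v : ι → E} (f : E →ₗ[ℝ] ℝ) {b : ℝ}
    {w : ι → ℝ} (hw : w ∈ stdSimplex ℝ ι) (hw₀ : ∀ i, f (v i) < b → w i = 0)
    (hsum : f (∑ i, w i • v i) = b) {i : ι} (hi : f (v i) ≠ b) : w i = 0 := by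
  have hnonneg : ∀ j ∈ Finset.univ, 0 ≤ w j * (f (v j) - b) := fun j _ => by
    rcases lt_or_ge (f (v j)) b with hj | hj
    · simp [hw₀ j hj]
    · exact mul_nonneg (hw.1 j) (sub_nonneg.2 hj)
  have hzero : ∑ j, w j * (f (v j) - b) = 0 :=
    calc ∑ j, w j * (f (v j) - b) = f (∑ j, w j • v j) - (∑ j, w j) * b := by
          simp [mul_sub, Finset.sum_mul]
      _ = 0 := by rw [hsum, hw.2]; ring
  have := (Finset.sum_eq_zero_iff_of_nonneg hnonneg).1 hzero i (Finset.mem_univ i)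
  exact (mul_eq_zero.1 this).resolve_right (sub_ne_zero.2 hi)

variable [TopologicalSpace E] [T2Space E] [IsTopologicalAddGroup E] [ContinuousSMul ℝ E]
  [LocallyConvexSpace ℝ E]

theorem inter_halfSpace_subset_image_stdSimplex (v : ι → E) (f : E →L[ℝ] ℝ) (b : ℝ)
    (hext : (convexHull ℝ (range v) ∩ {x | b ≤ f x}).extremePoints ℝ ⊆ range v) :
    convexHull ℝ (range v) ∩ {x | b ≤ f x} ⊆
      Fintype.linearCombination ℝ v '' {w ∈ stdSimplex ℝ ι | ∀ i, f (v i) < b → w i = 0} := by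
  set C := convexHull ℝ (range v) ∩ {x | b ≤ f x}
  set W := {w : ι → ℝ | ∀ i, f (v i) < b → w i = 0}
  have hC : IsCompact C :=
    ((finite_range v).isCompact_convexHull (𝕜 := ℝ)).inter_right
      (isClosed_le continuous_const f.continuous)
  have hCconv : Convex ℝ C :=
    (convex_convexHull ℝ _).inter (convex_halfSpace_ge f.toLinearMap.isLinear b)
  have hW : IsClosed W := by
    simp only [W, ofPred_forall]
    exact isClosed_iInter fun i => isClosed_iInter fun _ =>
      isClosed_eq (continuous_apply i) continuous_const
  have hWconv : Convex ℝ W := by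
    intro w hw w' hw' s t _ _ _ i hi
    simp [hw i hi, hw' i hi]
  have hT : IsCompact (Fintype.linearCombination ℝ v '' (stdSimplex ℝ ι ∩ W)) :=
    ((isCompact_stdSimplex ℝ ι).inter_right hW).image (LinearMap.continuous_on_pi _)
  have hTconv : Convex ℝ (Fintype.linearCombination ℝ v '' (stdSimplex ℝ ι ∩ W)) :=
    ((convex_stdSimplex ℝ ι).inter hWconv).linear_image _
  have hextT : C.extremePoints ℝ ⊆ Fintype.linearCombination ℝ v '' (stdSimplex ℝ ι ∩ W) := by
    classical
    intro x hx
    obtain ⟨k, rfl⟩ := hext hx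
    refine ⟨Pi.single k 1, ⟨single_mem_stdSimplex ℝ k, fun i hi => ?_⟩, by simp⟩
    have hik : i ≠ k := by rintro rfl; exact hi.not_ge hx.1.2
    simp [hik]
  rw [← closure_convexHull_extremePoints hC hCconv]
  exact closure_minimal (convexHull_min hextT hTconv) hT.isClosed

theorem exists_crossing_eq_weighted_sum_on_hyperplane {v : ι → E} {f : E →L[ℝ] ℝ} {b : ℝ}
    (hext : (convexHull ℝ (range v) ∩ {x | b ≤ f x}).extremePoints ℝ ⊆ range v)
    {p q : ι} (hp : b < f (v p)) (hq : f (v q) < b) :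
    ∃ t ∈ Ioo (0 : ℝ) 1, ∃ w ∈ stdSimplex ℝ ι,
      (∀ i, f (v i) ≠ b → w i = 0) ∧ ∑ i, w i • v i = t • v p + (1 - t) • v q := by
  have hgap : 0 < f (v p) - f (v q) := by linarith
  set t := (b - f (v q)) / (f (v p) - f (v q))
  have ht : t ∈ Ioo (0 : ℝ) 1 :=
    ⟨div_pos (by linarith) hgap, (div_lt_one hgap).2 (by linarith)⟩
  have hcross : f (t • v p + (1 - t) • v q) = b := by
    simp only [map_add, map_smul, smul_eq_mul, t]
    field_simp
    ring
  have hmem : t • v p + (1 - t) • v q ∈ convexHull ℝ (range v) ∩ {x | b ≤ f x} :=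
    ⟨convex_convexHull ℝ _ (subset_convexHull ℝ _ (mem_range_self p))
      (subset_convexHull ℝ _ (mem_range_self q)) ht.1.le (by linarith [ht.2]) (by ring),
      hcross.ge⟩
  obtain ⟨w, ⟨hw, hw₀⟩, hwsum⟩ := inter_halfSpace_subset_image_stdSimplex v f b hext hmem
  rw [Fintype.linearCombination_apply] at hwsum
  refine ⟨t, ht, w, hw, fun i hi => ?_, hwsum⟩
  exact weight_eq_zero_of_apply_sum_eq f.toLinearMap hw hw₀ (by simpa [hwsum] using hcross) hi

end HalfSpaceCut

theorem mem_of_mem_convexHull_of_forall_int {ι : Type*} {S : Set (ι → ℝ)}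
    (hS : S ⊆ univ.pi fun _ => Icc 0 1) {x : ι → ℝ} (hx : x ∈ convexHull ℝ S)
    (hint : ∀ i, ∃ z : ℤ, x i = z) : x ∈ S := by
  have hcube : x ∈ univ.pi fun _ => Icc (0 : ℝ) 1 :=
    convexHull_min hS (convex_pi fun _ _ => convex_Icc 0 1) hx
  have hvertex : x ∈ (univ.pi fun _ => Icc (0 : ℝ) 1).extremePoints ℝ := by
    rw [extremePoints_pi]
    intro i _
    obtain ⟨z, hz⟩ := hint i
    obtain ⟨h0, h1⟩ := hcube i (mem_univ i)
    rw [hz] at h0 h1 ⊢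
    have : z = 0 ∨ z = 1 := by
      have : (0 : ℤ) ≤ z := by exact_mod_cast h0
      have : z ≤ 1 := by exact_mod_cast h1
      omega
    rcases this with rfl | rfl <;> simp
  exact extremePoints_convexHull_subset
    (inter_extremePoints_subset_extremePoints_of_subset
      (convexHull_min hS (convex_pi fun _ _ => convex_Icc 0 1)) ⟨hx, hvertex⟩)

section EdgePolytope

variable {d : ℕ}

theorem rho_mem_unitCube {i j : Fin d} (h : i ≠ j) : rho i j ∈ univ.pi fun _ => Icc 0 1 := by
  intro t _
  by_cases hi : t = i <;> by_cases hj : t = j <;> simp_all [rho]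

theorem dotp_rho (a : Fin d → ℝ) (i j : Fin d) : dotp a (rho i j) = a i + a j := by
  simp [dotp, rho, mul_add, Finset.sum_add_distrib]

theorem extremePoints_subset_of_isIntegralSet {G : SimpleGraph (Fin d)} {H : Set (Fin d → ℝ)}
    (h : IsIntegralSet (edgePolytope G ∩ H)) :
    (edgePolytope G ∩ H).extremePoints ℝ ⊆ {x | ∃ i j, G.Adj i j ∧ x = rho i j} := by
  intro x hx
  refine mem_of_mem_convexHull_of_forall_int ?_ hx.1.1 (h x hx)
  rintro _ ⟨i, j, hij, rfl⟩
  exact rho_mem_unitCube hij.ne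

end EdgePolytope

-- The first four edges form the 4-cycle `0-1-2-3`, in cyclic order.
def G5edge : Fin 8 → Fin 6 × Fin 6 :=
  ![(0, 1), (1, 2), (2, 3), (0, 3), (0, 4), (1, 4), (1, 5), (2, 5)]

noncomputable def G5edgeVec (k : Fin 8) : Fin 6 → ℝ := rho (G5edge k).1 (G5edge k).2

theorem G5_adj_iff (i j : Fin 6) : G5.Adj i j ↔ ∃ k, G5edge k = (i, j) ∨ G5edge k = (j, i) := by
  simp only [G5, SimpleGraph.fromRel_adj]
  revert i j
  decide

theorem setOf_adj_rho_G5_eq_range :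
    {x | ∃ i j, G5.Adj i j ∧ x = rho i j} = range G5edgeVec := by
  ext x
  simp only [G5_adj_iff, mem_ofPred_eq, mem_range, G5edgeVec]
  constructor
  · rintro ⟨i, j, ⟨k, hk | hk⟩, rfl⟩ <;> exact ⟨k, by simp [hk, rho_comm]⟩
  · rintro ⟨k, rfl⟩
    exact ⟨_, _, ⟨k, Or.inl rfl⟩, rfl⟩

theorem edgePolytope_G5 : edgePolytope G5 = convexHull ℝ (range G5edgeVec) := by
  rw [edgePolytope, setOf_adj_rho_G5_eq_range]

def IsOppositeInCycle (p q : Fin 8) : Prop :=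
  (p = 0 ∧ q = 2) ∨ (p = 2 ∧ q = 0) ∨ (p = 1 ∧ q = 3) ∨ (p = 3 ∧ q = 1)

/- Edges of positive weight lie inside the endpoints of `p` and `q`. A shared endpoint would need an
edge other than `p`, `q` through it inside the three endpoints; for disjoint `p`, `q` each of the
four endpoints needs an edge joining `p` to `q`, and such edges cover all four only on the 4-cycle. -/
theorem isOppositeInCycle_of_weighted_sum_eq {p q : Fin 8} {t : ℝ} (ht : t ∈ Ioo (0 : ℝ) 1)
    {w : Fin 8 → ℝ} (hw : ∀ k, 0 ≤ w k) (hp : w p = 0) (hq : w q = 0)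
    (h : ∑ k, w k • G5edgeVec k = t • G5edgeVec p + (1 - t) • G5edgeVec q) :
    IsOppositeInCycle p q := by
  have hcoord (i : Fin 6) :
      ∑ k, w k * G5edgeVec k i = t * G5edgeVec p i + (1 - t) * G5edgeVec q i := by
    simpa using congrFun h i
  have h0 := hcoord 0
  have h1 := hcoord 1
  have h2 := hcoord 2
  have h3 := hcoord 3
  have h4 := hcoord 4
  have h5 := hcoord 5
  simp [Fin.sum_univ_eight, G5edgeVec, G5edge, rho] at h0 h1 h2 h3 h4 h5
  obtain ⟨ht0, ht1⟩ := ht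
  unfold IsOppositeInCycle
  fin_cases p <;> simp at h0 h1 h2 h3 h4 h5 hp <;>
    fin_cases q <;> simp at h0 h1 h2 h3 h4 h5 hq ⊢ <;>
    linarith [hw 0, hw 1, hw 2, hw 3, hw 4, hw 5, hw 6, hw 7]

-- The zero edges `4`–`7` force `a 0 = a 1 = a 2`, so cycle edges `0, 1` (and `2, 3`) take equal
-- values.
theorem exists_not_isOppositeInCycle (a : Fin 6 → ℝ) (b : ℝ) {p₀ q₀ : Fin 8}
    (hp₀ : b < dotp a (G5edgeVec p₀)) (hq₀ : dotp a (G5edgeVec q₀) < b) :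
    ∃ p q, b < dotp a (G5edgeVec p) ∧ dotp a (G5edgeVec q) < b ∧ ¬ IsOppositeInCycle p q := by
  by_contra! hopp
  have hval (k : Fin 8) : dotp a (G5edgeVec k) = a (G5edge k).1 + a (G5edge k).2 :=
    dotp_rho a _ _
  have hoff (k : Fin 8) (hk : 4 ≤ k) : dotp a (G5edgeVec k) = b := by
    rcases lt_trichotomy (dotp a (G5edgeVec k)) b with h | h | h
    · rcases hopp p₀ k hp₀ h with ⟨-, rfl⟩ | ⟨-, rfl⟩ | ⟨-, rfl⟩ | ⟨-, rfl⟩ <;>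
        exact absurd hk (by decide)
    · exact h
    · rcases hopp k q₀ h hq₀ with ⟨rfl, -⟩ | ⟨rfl, -⟩ | ⟨rfl, -⟩ | ⟨rfl, -⟩ <;>
        exact absurd hk (by decide)
  have h4 := hoff 4 (by decide)
  have h5 := hoff 5 (by decide)
  have h6 := hoff 6 (by decide)
  have h7 := hoff 7 (by decide)
  have h01 : dotp a (G5edgeVec 0) = dotp a (G5edgeVec 1) := by
    simp [hval, G5edge] at h4 h5 h6 h7 ⊢
    linarith
  have h23 : dotp a (G5edgeVec 2) = dotp a (G5edgeVec 3) := by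
    simp [hval, G5edge] at h4 h5 h6 h7 ⊢
    linarith
  rcases hopp p₀ q₀ hp₀ hq₀ with ⟨rfl, rfl⟩ | ⟨rfl, rfl⟩ | ⟨rfl, rfl⟩ | ⟨rfl, rfl⟩
  · exact absurd (hopp 1 2 (h01 ▸ hp₀) hq₀) (by simp [IsOppositeInCycle])
  · exact absurd (hopp 3 0 (h23 ▸ hp₀) hq₀) (by simp [IsOppositeInCycle])
  · exact absurd (hopp 0 3 (h01 ▸ hp₀) hq₀) (by simp [IsOppositeInCycle])
  · exact absurd (hopp 2 1 (h23 ▸ hp₀) hq₀) (by simp [IsOppositeInCycle])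

/-- this graph has a 4-cycle, yet its edge polytope is indecomposable. -/
theorem stmt5 :
    ¬ ∃ (a : Fin 6 → ℝ) (b : ℝ), Decomposes (edgePolytope G5) a b := by
  rintro ⟨a, b, -, ⟨y, hy, hyb⟩, ⟨y', hy', hyb'⟩, hupper, -⟩
  let f : (Fin 6 → ℝ) →L[ℝ] ℝ := LinearMap.toContinuousLinearMap (dotProductBilin ℝ ℝ a)
  rw [edgePolytope_G5] at hy hy'
  obtain ⟨_, ⟨q₀, rfl⟩, hq₀ : dotp a (G5edgeVec q₀) ≤ dotp a y⟩ :=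
    (f.toLinearMap.concaveOn convex_univ).exists_le_of_mem_convexHull (subset_univ _) hy
  obtain ⟨_, ⟨p₀, rfl⟩, hp₀ : dotp a y' ≤ dotp a (G5edgeVec p₀)⟩ :=
    (f.toLinearMap.convexOn convex_univ).exists_ge_of_mem_convexHull (subset_univ _) hy'
  have hext := extremePoints_subset_of_isIntegralSet hupper
  rw [edgePolytope_G5, setOf_adj_rho_G5_eq_range] at hext
  obtain ⟨p, q, hp, hq, hpq⟩ :=
    exists_not_isOppositeInCycle a b (hyb'.trans_le hp₀) (hq₀.trans_lt hyb)
  obtain ⟨t, ht, w, hw, hw₀, hsum⟩ :=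
    exists_crossing_eq_weighted_sum_on_hyperplane (f := f) hext hp hq
  exact hpq (isOppositeInCycle_of_weighted_sum_eq ht hw.1 (hw₀ p hp.ne') (hw₀ q hq.ne) hsum)
end

section
/- Two distinct Type I separating hyperplanes of the edge polytope P_G yield different decompositions of P_G, unless their weight vectors differ by an overall sign. Equivalently, a decomposition of P_G determines its inducing Type I weight function a: [d] → {1,-1} up to global sign. -/
open scoped BigOperators

lemma keyprop {d : ℕ} (G : SimpleGraph (Fin d)) (hG : G.Connected)
    (a c : Fin d → ℝ) (ha : ∀ t, a t = 1 ∨ a t = -1) (hc : ∀ t, c t = 1 ∨ c t = -1)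
    (h : ∀ i j, G.Adj i j → a i + a j = c i + c j) : a = c ∨ a = -c := by
  have hne : Nonempty (Fin d) := hG.nonempty
  obtain ⟨i0⟩ := hne
  have prop : ∀ (Q : Fin d → Prop), (∀ i j, G.Adj i j → Q i → Q j) →
      ∀ i j : Fin d, G.Reachable i j → Q i → Q j := by
    intro Q hQ i j hr
    obtain ⟨w⟩ := hr
    induction w with
    | nil => exact id
    | cons h' w ih => exact fun hi => ih (hQ _ _ h' hi)
  have step1 : ∀ i j, G.Adj i j → a i = c i → a j = c j := by
    intro i j hij hi
    have := h i j hij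
    linarith
  have step2 : ∀ i j, G.Adj i j → a i = -c i → a j = -c j := by
    intro i j hij hi
    have hh := h i j hij
    rcases ha j with h2 | h2 <;> rcases hc i with h3 | h3 <;>
      rcases hc j with h4 | h4 <;> simp only [h2, h3, h4] at hh hi ⊢ <;> linarith
  have h0 : a i0 = c i0 ∨ a i0 = -c i0 := by
    rcases ha i0 with h' | h' <;> rcases hc i0 with h'' | h'' <;> rw [h', h''] <;> norm_num
  rcases h0 with h0 | h0
  · left; funext t; exact prop _ step1 i0 t (hG.preconnected i0 t) h0
  · right; funext t
    simpa using prop _ step2 i0 t (hG.preconnected i0 t) h0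

lemma sign_eq {x y : ℝ} (h1 : 0 ≤ x ↔ 0 ≤ y) (h2 : x ≤ 0 ↔ y ≤ 0)
    (hx : x = 2 ∨ x = 0 ∨ x = -2) (hy : y = 2 ∨ y = 0 ∨ y = -2) : x = y := by
  rcases hx with h | h | h <;> rcases hy with h' | h' | h' <;> subst h <;> subst h' <;>
    first | rfl | (exfalso; simp_all; linarith)


/-- two Type I separating hyperplanes giving the same (unordered)
decomposition have weight vectors equal up to a global sign. -/
theorem stmt9 {d : ℕ} (G : SimpleGraph (Fin d)) (hG : G.Connected)
    (a b : Fin d → ℝ)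
    (ha : ∀ t, a t = 1 ∨ a t = -1) (hb : ∀ t, b t = 1 ∨ b t = -1)
    (hda : Decomposes (edgePolytope G) a 0) (hdb : Decomposes (edgePolytope G) b 0)
    (hsame : ({edgePolytope G ∩ {x | 0 ≤ dotp a x},
               edgePolytope G ∩ {x | dotp a x ≤ 0}} : Set (Set (Fin d → ℝ))) =
             {edgePolytope G ∩ {x | 0 ≤ dotp b x},
              edgePolytope G ∩ {x | dotp b x ≤ 0}}) :
    a = b ∨ a = -b := by
  set S1 := edgePolytope G ∩ {x | 0 ≤ dotp a x} with hS1
  set S2 := edgePolytope G ∩ {x | dotp a x ≤ 0} with hS2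
  set T1 := edgePolytope G ∩ {x | 0 ≤ dotp b x} with hT1
  set T2 := edgePolytope G ∩ {x | dotp b x ≤ 0} with hT2
  have hmem : ∀ i j : Fin d, G.Adj i j → rho i j ∈ edgePolytope G := by
    intro i j hij
    exact subset_convexHull ℝ _ ⟨i, j, hij, rfl⟩
  have hdot : ∀ (v : Fin d → ℝ) (i j : Fin d), dotp v (rho i j) = v i + v j := by
    intro v i j
    simp [dotp, rho, mul_add, Finset.sum_add_distrib, mul_ite, mul_one, mul_zero,
      Finset.sum_ite_eq', Finset.sum_ite_eq]
  have hsum : ∀ (v : Fin d → ℝ), (∀ t, v t = 1 ∨ v t = -1) → ∀ i j : Fin d,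
      v i + v j = 2 ∨ v i + v j = 0 ∨ v i + v j = -2 := by
    intro v hv i j
    rcases hv i with h | h <;> rcases hv j with h' | h' <;> rw [h, h'] <;> norm_num
  have hneS : S1 ≠ S2 := by
    obtain ⟨-, ⟨y, hy, hylt⟩, -⟩ := hda
    intro hEq
    have hy2 : y ∈ S2 := ⟨hy, le_of_lt hylt⟩
    rw [← hEq] at hy2
    exact absurd hy2.2 (by simpa using hylt)
  have h1 : S1 = T1 ∨ S1 = T2 := by
    have : S1 ∈ ({T1, T2} : Set (Set (Fin d → ℝ))) := hsame ▸ Set.mem_insert _ _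
    simpa using this
  have h2 : S2 = T1 ∨ S2 = T2 := by
    have : S2 ∈ ({T1, T2} : Set (Set (Fin d → ℝ))) := by
      rw [← hsame]; exact Set.mem_insert_of_mem _ rfl
    simpa using this
  rcases h1 with h1 | h1
  · -- S1 = T1, so S2 = T2
    have h2' : S2 = T2 := by
      rcases h2 with h2 | h2
      · exact absurd (h1.trans h2.symm) hneS
      · exact h2
    have hedge : ∀ i j : Fin d, G.Adj i j → a i + a j = b i + b j := by
      intro i j hij
      have hp := hmem i j hij
      have i1 := Set.ext_iff.mp h1 (rho i j)
      have i2 := Set.ext_iff.mp h2' (rho i j)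
      simp only [hS1, hS2, hT1, hT2] at i1 i2
      simp only [Set.mem_inter_iff, Set.mem_setOf_eq, hp, true_and, hdot] at i1 i2
      exact sign_eq i1 i2 (hsum a ha i j) (hsum b hb i j)
    exact keyprop G hG a b ha hb hedge
  · -- S1 = T2, so S2 = T1
    have h2' : S2 = T1 := by
      rcases h2 with h2 | h2
      · exact h2
      · exact absurd (h1.trans h2.symm) hneS
    have hedge : ∀ i j : Fin d, G.Adj i j → a i + a j = (-b) i + (-b) j := by
      intro i j hij
      have hp := hmem i j hij
      have i1 := Set.ext_iff.mp h1 (rho i j)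
      have i2 := Set.ext_iff.mp h2' (rho i j)
      simp only [hS1, hS2, hT1, hT2] at i1 i2
      simp only [Set.mem_inter_iff, Set.mem_setOf_eq, hp, true_and, hdot] at i1 i2
      have hnb : (-b) i + (-b) j = -(b i + b j) := by simp; ring
      rw [hnb]
      refine sign_eq ?_ ?_ (hsum a ha i j) ?_
      · constructor
        · intro h'; linarith [i1.mp h']
        · intro h'; exact i1.mpr (by linarith)
      · constructor
        · intro h'; linarith [i2.mp h']
        · intro h'; exact i2.mpr (by linarith)
      · rcases hsum b hb i j with h' | h' | h' <;> rw [h'] <;> norm_num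
    have hnb1 : ∀ t, (-b) t = 1 ∨ (-b) t = -1 := by
      intro t; rcases hb t with h' | h' <;> simp [h']
    rcases keyprop G hG a (-b) ha hnb1 hedge with h' | h'
    · right; exact h'
    · left; rw [h', neg_neg]
end
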